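/- arXiv:1905.07301 — 2 statements merged into one kernel-verified Lean document; each statement's English description precedes it below -/
import Mathlib

section
/- (Dulmage–Mendelsohn) Let G be a bipartite graph with bipartition (A, B) that has a perfect matching. An edge e of G lies in no perfect matching of G if and only if there exist a partition (A1, A2) of A and a partition (B1, B2) of B such that |A1| = |B1|, the edge e has one end in A2 and the other end in B1, and there is no edge of G joining a vertex of A1 to a vertex of B2. -/
namespace Paper

open SimpleGraph

variable {V : Type*}

/-- `∂(X)`: the set of edges of `G` with exactly one end in `X`. -/
def cutEdges (G : SimpleGraph V) (X : Set V) : Set (Sym2 V) :=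
  {e | e ∈ G.edgeSet ∧ ∃ x y, e = s(x, y) ∧ x ∈ X ∧ y ∉ X}

/-- An edge cut `∂(X)` is trivial if `X` or its complement is a singleton. -/
def IsTrivialShore (X : Set V) : Prop :=
  (∃ v, X = {v}) ∨ (∃ v, Xᶜ = {v})

/-- The edge cut `∂(X)` is tight: every perfect matching contains exactly one of its edges. -/
def IsTightCut (G : SimpleGraph V) (X : Set V) : Prop :=
  ∀ M : G.Subgraph, M.IsPerfectMatching → (M.edgeSet ∩ cutEdges G X).ncard = 1

/-- A connected graph with at least one edge in which every edge lies in a perfect matching. -/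
def MatchingCovered (G : SimpleGraph V) : Prop :=
  G.Connected ∧ G.edgeSet.Nonempty ∧
    ∀ e ∈ G.edgeSet, ∃ M : G.Subgraph, M.IsPerfectMatching ∧ e ∈ M.edgeSet

/-- A brick: a non-bipartite matching covered graph with no nontrivial tight cut. -/
def IsBrick (G : SimpleGraph V) : Prop :=
  MatchingCovered G ∧ ¬ G.Colorable 2 ∧
    ∀ X : Set V, IsTightCut G X → IsTrivialShore X

/-- Two edges are mutually dependent if every perfect matching contains both or neither. -/
def MutuallyDependent (G : SimpleGraph V) (e f : Sym2 V) : Prop :=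
  e ∈ G.edgeSet ∧ f ∈ G.edgeSet ∧
    ∀ M : G.Subgraph, M.IsPerfectMatching → (e ∈ M.edgeSet ↔ f ∈ M.edgeSet)

/-- An edge `e` of `G` is removable if `G − e` is matching covered. -/
def Removable (G : SimpleGraph V) (e : Sym2 V) : Prop :=
  e ∈ G.edgeSet ∧ MatchingCovered (G.deleteEdges {e})

/-- `{e, f}` is a removable doubleton of `G`. -/
def RemovableDoubleton (G : SimpleGraph V) (e f : Sym2 V) : Prop :=
  e ∈ G.edgeSet ∧ f ∈ G.edgeSet ∧ e ≠ f ∧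
    ¬ Removable G e ∧ ¬ Removable G f ∧ MatchingCovered (G.deleteEdges {e, f})

/-- A cubic graph: every vertex has degree 3. -/
def Cubic (G : SimpleGraph V) : Prop := ∀ v : V, (G.neighborSet v).ncard = 3

/-- A cubic graph is essentially 4-edge-connected if it is 2-edge-connected and
every 3-cut is trivial. -/
def EssFourEdgeConnected (G : SimpleGraph V) : Prop :=
  (∀ X : Set V, X.Nonempty → Xᶜ.Nonempty → 2 ≤ (cutEdges G X).ncard) ∧
    ∀ X : Set V, (cutEdges G X).ncard = 3 → IsTrivialShore X

/-- A non-bipartite matching covered graph is near-bipartite if removing some pair of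
edges yields a bipartite matching covered graph. -/
def NearBipartite (G : SimpleGraph V) : Prop :=
  MatchingCovered G ∧ ¬ G.Colorable 2 ∧
    ∃ e f : Sym2 V, e ∈ G.edgeSet ∧ f ∈ G.edgeSet ∧ e ≠ f ∧
      (G.deleteEdges {e, f}).Colorable 2 ∧ MatchingCovered (G.deleteEdges {e, f})

/-- The set of edges of `G` joining a vertex of `X` to a vertex of `Y`. -/
def betweenEdges (G : SimpleGraph V) (X Y : Set V) : Set (Sym2 V) :=
  {e | e ∈ G.edgeSet ∧ ∃ x ∈ X, ∃ y ∈ Y, e = s(x, y)}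

/-!
An edge `ab` (with `a ∈ A`, `b ∈ B`) lies in a perfect matching iff Hall's condition holds for
`A \ {a}` in `G - b`. Since `G` has a perfect matching, every `S ⊆ A` has `|N(S)| ≥ |S|`; so a set
`S ⊆ A \ {a}` violating the condition has `b ∈ N(S)` and `|N(S)| = |S|`, and `A₁ = S`,
`B₁ = N(S)` is the required partition. Conversely, with such a partition a perfect matching
through the edge `xy` would match `A₁ ∪ {x}` injectively into `B₁`.
-/

theorem _root_.Set.bijOn_of_injOn_of_ncard_le {α β : Type*} {f : α → β} {s : Set α}
    {t : Set β} (hmaps : Set.MapsTo f s t) (hinj : Set.InjOn f s) (hcard : t.ncard ≤ s.ncard)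
    (ht : t.Finite := by toFinite_tac) : Set.BijOn f s t := by
  refine ⟨hmaps, hinj, ?_⟩
  rw [Set.SurjOn, Set.eq_of_subset_of_ncard_le (Set.image_subset_iff.mpr hmaps)
    (by rwa [hinj.ncard_image]) ht]

theorem _root_.Set.exists_injOn_of_forall_ncard_le {α β : Type*} [Finite β] [Nonempty β]
    {s : Set α} (r : α → β → Prop) (hall : ∀ S ⊆ s, S.ncard ≤ {y | ∃ x ∈ S, r x y}.ncard) :
    ∃ f : α → β, Set.InjOn f s ∧ ∀ x ∈ s, r x (f x) := by
  classical
  have := Fintype.ofFinite β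
  obtain ⟨g, hg, hgr⟩ := (Fintype.all_card_le_filter_rel_iff_exists_injective
    fun (x : s) y => r x y).mp fun S => by
      have hS := hall (Subtype.val '' (S : Set s)) (by simp)
      rw [Set.ncard_image_of_injective _ Subtype.val_injective, Set.ncard_coe_finset] at hS
      convert hS using 1
      rw [← Set.ncard_coe_finset]
      congr 1
      ext y
      simp
  refine ⟨fun x => if hx : x ∈ s then g ⟨x, hx⟩ else Classical.arbitrary β, ?_, ?_⟩
  · intro x hx y hy hxy
    simpa using congrArg Subtype.val (hg (by simpa [hx, hy] using hxy))
  · intro x hx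
    simpa [hx] using hgr ⟨x, hx⟩

section

variable {G : SimpleGraph V}

theorem _root_.SimpleGraph.Subgraph.IsPerfectMatching.ncard_le_ncard [Finite V]
    {M : G.Subgraph} (hM : M.IsPerfectMatching) {S T : Set V}
    (hST : ∀ x ∈ S, ∀ y, M.Adj x y → y ∈ T) : S.ncard ≤ T.ncard := by
  choose p hp using fun v => Subgraph.isPerfectMatching_iff.mp hM v
  exact Set.ncard_le_ncard_of_injOn p (fun x hx => hST x hx _ (hp x).1)
    fun x _ y _ hxy => hM.1.eq_of_adj_right (hp x).1 (hxy ▸ (hp y).1)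

theorem _root_.SimpleGraph.Subgraph.IsPerfectMatching.not_adj_of_ncard_eq [Finite V]
    {M : G.Subgraph} (hM : M.IsPerfectMatching) {A₁ B₁ : Set V} (hcard : A₁.ncard = B₁.ncard)
    (hA₁ : ∀ u ∈ A₁, ∀ w, G.Adj u w → w ∈ B₁) {x y : V} (hx : x ∉ A₁) (hy : y ∈ B₁) :
    ¬ M.Adj x y := by
  intro hxy
  have := hM.ncard_le_ncard (S := insert x A₁) (T := B₁) <| by
    rintro u (rfl | hu) w huw
    · exact hM.1.eq_of_adj_left hxy huw ▸ hy
    · exact hA₁ u hu w (M.adj_sub huw)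
  rw [Set.ncard_insert_of_notMem hx] at this
  omega

theorem _root_.SimpleGraph.Subgraph.IsPerfectMatching.mem_and_ncard_eq_of_ncard_lt [Finite V]
    {M : G.Subgraph} (hM : M.IsPerfectMatching) {S : Set V} {b : V}
    (h : {y | ∃ x ∈ S, G.Adj x y ∧ y ≠ b}.ncard < S.ncard) :
    b ∈ {y | ∃ x ∈ S, G.Adj x y} ∧ S.ncard = {y | ∃ x ∈ S, G.Adj x y}.ncard := by
  set N := {y | ∃ x ∈ S, G.Adj x y}
  have hN : {y | ∃ x ∈ S, G.Adj x y ∧ y ≠ b} = N \ {b} := by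
    ext y
    simp only [N, Set.mem_ofPred_eq, Set.mem_sdiff, Set.mem_singleton_iff]
    grind
  have hSN : S.ncard ≤ N.ncard := hM.ncard_le_ncard fun x hx y hxy => ⟨x, hx, M.adj_sub hxy⟩
  rw [hN] at h
  have hb : b ∈ N := by
    by_contra hb
    rw [Set.sdiff_singleton_eq_self hb] at h
    omega
  have := Set.ncard_sdiff_singleton_add_one hb
  exact ⟨hb, by omega⟩

theorem _root_.SimpleGraph.Subgraph.exists_isPerfectMatching_of_bijOn {A B : Set V}
    (hdisj : Disjoint A B) (hcover : A ∪ B = Set.univ) {f : V → V} (hf : Set.BijOn f A B)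
    (hadj : ∀ x ∈ A, G.Adj x (f x)) :
    ∃ M : G.Subgraph, M.IsPerfectMatching ∧ ∀ x ∈ A, M.Adj x (f x) := by
  let M : G.Subgraph :=
    { verts := Set.univ
      Adj := fun v w => (v ∈ A ∧ f v = w) ∨ (w ∈ A ∧ f w = v)
      adj_sub := by
        rintro v w (⟨hv, rfl⟩ | ⟨hw, rfl⟩)
        · exact hadj v hv
        · exact (hadj w hw).symm
      edge_vert := fun _ => trivial
      symm := ⟨fun _ _ h => Or.symm h⟩ }
  refine ⟨M, Subgraph.isPerfectMatching_iff.mpr fun v => ?_, fun x hx => .inl ⟨hx, rfl⟩⟩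
  rcases hcover.symm ▸ Set.mem_univ v with hv | hv
  · refine ⟨f v, .inl ⟨hv, rfl⟩, ?_⟩
    rintro w (⟨-, rfl⟩ | ⟨hw, rfl⟩)
    · rfl
    · exact (hdisj.ne_of_mem hv (hf.mapsTo hw) rfl).elim
  · obtain ⟨u, hu, rfl⟩ := hf.surjOn hv
    refine ⟨u, .inr ⟨hu, rfl⟩, ?_⟩
    rintro w (⟨hw, -⟩ | ⟨hw, hwu⟩)
    · exact (hdisj.ne_of_mem hw (hf.mapsTo hu) rfl).elim
    · exact hf.injOn hw hu hwu

variable {A B : Set V}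

theorem _root_.SimpleGraph.IsBipartiteWith.exists_eq_mk_of_mem_edgeSet
    (hG : G.IsBipartiteWith A B) {e : Sym2 V} (he : e ∈ G.edgeSet) :
    ∃ a ∈ A, ∃ b ∈ B, G.Adj a b ∧ e = s(a, b) := by
  induction e using Sym2.ind with
  | h u v =>
    rcases hG.mem_of_adj he with ⟨hu, hv⟩ | ⟨hu, hv⟩
    · exact ⟨u, hu, v, hv, he, rfl⟩
    · exact ⟨v, hv, u, hu, G.adj_symm he, Sym2.eq_swap⟩

theorem _root_.SimpleGraph.IsBipartiteWith.ncard_eq_of_isPerfectMatching [Finite V]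
    (hG : G.IsBipartiteWith A B) {M : G.Subgraph} (hM : M.IsPerfectMatching) :
    A.ncard = B.ncard :=
  le_antisymm (hM.ncard_le_ncard fun _ hx _ h => hG.mem_of_mem_adj hx (M.adj_sub h))
    (hM.ncard_le_ncard fun _ hx _ h => hG.symm.mem_of_mem_adj hx (M.adj_sub h))

theorem _root_.SimpleGraph.IsBipartiteWith.exists_isPerfectMatching_adj [Finite V]
    (hG : G.IsBipartiteWith A B) (hcover : A ∪ B = Set.univ) (hcard : A.ncard = B.ncard)
    {a b : V} (ha : a ∈ A) (hab : G.Adj a b)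
    (hall : ∀ S ⊆ A \ {a}, S.ncard ≤ {y | ∃ x ∈ S, G.Adj x y ∧ y ≠ b}.ncard) :
    ∃ M : G.Subgraph, M.IsPerfectMatching ∧ M.Adj a b := by
  classical
  have : Nonempty V := ⟨a⟩
  obtain ⟨f, hinj, hf⟩ := Set.exists_injOn_of_forall_ncard_le _ hall
  set F := Function.update f a b
  have hFf : Set.EqOn f F (A \ {a}) := fun x hx => (Function.update_of_ne hx.2 b f).symm
  have hadj : ∀ x ∈ A, G.Adj x (F x) := by
    intro x hx
    by_cases hxa : x = a
    · subst hxa; simpa [F] using hab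
    · exact hFf ⟨hx, hxa⟩ ▸ (hf x ⟨hx, hxa⟩).1
  have hinjF : Set.InjOn F A := by
    rw [← Set.insert_eq_of_mem ha, ← Set.insert_sdiff_singleton,
      Set.injOn_insert fun h => h.2 rfl]
    refine ⟨hinj.congr hFf, ?_⟩
    rintro ⟨x, hx, hFx⟩
    exact (hf x hx).2 (by rw [hFf hx, hFx]; simp [F])
  have hF : Set.BijOn F A B := Set.bijOn_of_injOn_of_ncard_le
    (fun x hx => hG.mem_of_mem_adj hx (hadj x hx)) hinjF hcard.ge
  obtain ⟨M, hM, hMF⟩ := Subgraph.exists_isPerfectMatching_of_bijOn hG.disjoint hcover hF hadj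
  exact ⟨M, hM, by simpa [F] using hMF a ha⟩

end

/-- Dulmage–Mendelsohn. Let `G` be a bipartite graph with bipartition
`(A, B)` having a perfect matching. An edge `e` lies in no perfect matching of `G` iff
there are partitions `(A1, A2)` of `A` and `(B1, B2)` of `B` with `|A1| = |B1|`, with `e`
having one end in `A2` and the other in `B1`, and with no edge joining `A1` to `B2`. -/
theorem stmt9 {V : Type*} [Fintype V] (G : SimpleGraph V)
    (A B : Set V) (hdisj : Disjoint A B) (hcover : A ∪ B = Set.univ)
    (hbip : ∀ x y : V, G.Adj x y → (x ∈ A ∧ y ∈ B) ∨ (x ∈ B ∧ y ∈ A))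
    (hpm : ∃ M : G.Subgraph, M.IsPerfectMatching)
    (e : Sym2 V) (he : e ∈ G.edgeSet) :
    (∀ M : G.Subgraph, M.IsPerfectMatching → e ∉ M.edgeSet) ↔
      ∃ A1 A2 B1 B2 : Set V,
        A1 ∪ A2 = A ∧ Disjoint A1 A2 ∧ B1 ∪ B2 = B ∧ Disjoint B1 B2 ∧
        A1.ncard = B1.ncard ∧
        (∃ x ∈ A2, ∃ y ∈ B1, e = s(x, y)) ∧
        (∀ x ∈ A1, ∀ y ∈ B2, ¬ G.Adj x y) := by
  have hG : G.IsBipartiteWith A B := ⟨hdisj, hbip⟩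
  constructor
  · intro hno
    obtain ⟨M₀, hM₀⟩ := hpm
    obtain ⟨a, ha, b, -, hab, rfl⟩ := hG.exists_eq_mk_of_mem_edgeSet he
    by_contra hpart
    suffices hall : ∀ S ⊆ A \ {a}, S.ncard ≤ {y | ∃ x ∈ S, G.Adj x y ∧ y ≠ b}.ncard by
      obtain ⟨M, hM, hMab⟩ := hG.exists_isPerfectMatching_adj hcover
        (hG.ncard_eq_of_isPerfectMatching hM₀) ha hab hall
      exact hno M hM hMab
    intro S hS
    by_contra! hdef
    obtain ⟨hbN, hSN⟩ := hM₀.mem_and_ncard_eq_of_ncard_lt hdef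
    have hNB : {y | ∃ x ∈ S, G.Adj x y} ⊆ B := fun y ⟨x, hx, hxy⟩ =>
      hG.mem_of_mem_adj (hS hx).1 hxy
    exact hpart ⟨S, A \ S, _, B \ _, Set.union_sdiff_cancel (hS.trans Set.sdiff_subset),
      disjoint_sdiff_self_right, Set.union_sdiff_cancel hNB, disjoint_sdiff_self_right, hSN,
      ⟨a, ⟨ha, fun h => (hS h).2 rfl⟩, b, hbN, rfl⟩, fun x hx y hy hxy => hy.2 ⟨x, hx, hxy⟩⟩
  · rintro ⟨A1, A2, B1, B2, hA, hAd, hB, -, hcard, ⟨x, hx, y, hy, rfl⟩, hA1B2⟩ M hM hMe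
    refine hM.not_adj_of_ncard_eq hcard (fun u hu w huw => ?_) (hAd.notMem_of_mem_right hx)
      hy hMe
    have hw : w ∈ B1 ∪ B2 := hB ▸ hG.mem_of_mem_adj (hA ▸ Or.inl hu) huw
    exact hw.resolve_right (hA1B2 u hu w · huw)

end Paper
end

section
/- For every integer k ≥ 2, the prism of order 4k + 2 (i.e., the Cartesian product C_{2k+1} □ K_2) is an essentially 4-edge-connected cubic near-bipartite brick. -/
namespace Paper

open SimpleGraph

variable {V : Type*}

/-!
Write `U`, `D` and `r` for the numbers of vertices of `X` whose successor on the cycle, predecessor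
on the cycle, or partner on the rung lies outside `X`. Counting the edges of `∂X` at their ends in
`X` gives `|∂X| = U + D + r`, and every copy of the cycle that `X` meets without containing it
contributes to both `U` and `D`.

The prism `C_{2k+1} □ K₂` has the perfect matching of all rungs, and for every position `t` the
perfect matching `M_t` made of the rung at `t` and of alternate edges of the two paths left over;
every cycle edge lies in exactly `k` of the `M_t`. If `∂X` is tight, then the rungs give `r = 1`
and summing `|M_t ∩ ∂X| = 1` over `t` gives `2k + 1 = r + k (U + D)`, so `U + D = 2`. Hence some
copy of the cycle lies inside `X` or outside it; up to complementing `X`, the set `X` then lies in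
the other copy, so `|X| = r = 1`. The same count shows that a nontrivial cut has at least four
edges.

Deleting the two edges between positions `2k` and `0` leaves the ladder `P_{2k+1} □ K₂`, which is
bipartite and covered by the rung matching and the `M_t` with `t` even.
-/

noncomputable def exitCount (f : V → V) (X : Set V) : ℕ := {v ∈ X | f v ∉ X}.ncard

lemma exitCount_eq_sum [Fintype V] (f : V → V) (X : Set V) [DecidablePred (· ∈ X)] :
    exitCount f X = ∑ v, if v ∈ X ∧ f v ∉ X then 1 else 0 := by
  rw [Finset.sum_boole, exitCount, Set.ncard_eq_toFinset_card']
  simp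

section Matchings

def matchingOfInvolutive (G : SimpleGraph V) (f : V → V) (hf : Function.Involutive f)
    (hadj : ∀ v, G.Adj v (f v)) : G.Subgraph where
  verts := Set.univ
  Adj u v := v = f u
  adj_sub := by rintro u v rfl; exact hadj u
  edge_vert _ := Set.mem_univ _
  symm := ⟨by rintro u v rfl; exact (hf u).symm⟩

variable {G : SimpleGraph V} {f : V → V} {hf : Function.Involutive f}
  {hadj : ∀ v, G.Adj v (f v)}

lemma isPerfectMatching_matchingOfInvolutive :
    (matchingOfInvolutive G f hf hadj).IsPerfectMatching :=
  Subgraph.isPerfectMatching_iff.2 fun v => ⟨f v, rfl, fun _ hw => hw⟩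

lemma mem_edgeSet_matchingOfInvolutive {a b : V} :
    s(a, b) ∈ (matchingOfInvolutive G f hf hadj).edgeSet ↔ b = f a :=
  Iff.rfl

lemma ncard_edgeSet_inter_cutEdges_matchingOfInvolutive (X : Set V) :
    ((matchingOfInvolutive G f hf hadj).edgeSet ∩ cutEdges G X).ncard = exitCount f X := by
  have h : (matchingOfInvolutive G f hf hadj).edgeSet ∩ cutEdges G X
      = (fun v => s(v, f v)) '' {v ∈ X | f v ∉ X} := by
    ext e
    constructor
    · rintro ⟨hM, -, x, y, rfl, hx, hy⟩
      rw [mem_edgeSet_matchingOfInvolutive] at hM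
      exact ⟨x, ⟨hx, hM ▸ hy⟩, by rw [hM]⟩
    · rintro ⟨v, ⟨hv, hfv⟩, rfl⟩
      exact ⟨rfl, hadj v, v, f v, rfl, hv, hfv⟩
  rw [h]
  refine Set.InjOn.ncard_image ?_
  rintro u ⟨-, hu⟩ w ⟨hw, -⟩ huw
  rcases Sym2.eq_iff.1 huw with ⟨h, -⟩ | ⟨-, h⟩
  · exact h
  · exact absurd (h ▸ hw) hu

end Matchings

lemma exitCount_eq_one_of_isTightCut {G : SimpleGraph V} {X : Set V} (hX : IsTightCut G X)
    (f : V → V) (hf : Function.Involutive f) (hadj : ∀ v, G.Adj v (f v)) :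
    exitCount f X = 1 := by
  rw [← ncard_edgeSet_inter_cutEdges_matchingOfInvolutive (hf := hf) (hadj := hadj)]
  exact hX _ isPerfectMatching_matchingOfInvolutive

section Cuts

variable {G : SimpleGraph V}

lemma cutEdges_compl (X : Set V) : cutEdges G Xᶜ = cutEdges G X := by
  ext e
  constructor
  · rintro ⟨he, x, y, rfl, hx, hy⟩
    exact ⟨he, y, x, Sym2.eq_swap, not_not.1 hy, hx⟩
  · rintro ⟨he, x, y, rfl, hx, hy⟩
    exact ⟨he, y, x, Sym2.eq_swap, hy, not_not.2 hx⟩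

lemma isTightCut_compl {X : Set V} : IsTightCut G Xᶜ ↔ IsTightCut G X := by
  simp only [IsTightCut, cutEdges_compl]

lemma isTrivialShore_compl {X : Set V} : IsTrivialShore Xᶜ ↔ IsTrivialShore X := by
  simp only [IsTrivialShore, compl_compl, or_comm]

lemma ncard_cutEdges_eq_sum_exitCount [Finite V] {ι : Type*} [Fintype ι] (φ : ι → V → V)
    (hN : ∀ v, G.neighborSet v = Set.range (φ · v)) (hφ : ∀ v, Function.Injective (φ · v))
    (X : Set V) : (cutEdges G X).ncard = ∑ j, exitCount (φ j) X := by
  classical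
  have : Fintype V := Fintype.ofFinite V
  let S : Finset (Σ _ : ι, V) := Finset.univ.sigma fun j => {v ∈ X | φ j v ∉ X}.toFinset
  have hcut : cutEdges G X = ↑(S.image fun p => s(p.2, φ p.1 p.2)) := by
    ext e
    simp only [Finset.coe_image, Set.mem_image, Finset.mem_coe, S, Finset.mem_sigma,
      Finset.mem_univ, true_and, Set.mem_toFinset, Set.mem_ofPred_eq]
    constructor
    · rintro ⟨he, x, y, rfl, hx, hy⟩
      have hy' : y ∈ G.neighborSet x := he
      obtain ⟨j, rfl⟩ := (hN x ▸ hy')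
      exact ⟨⟨j, x⟩, ⟨hx, hy⟩, rfl⟩
    · rintro ⟨⟨j, v⟩, ⟨hv, hjv⟩, rfl⟩
      have hadj : φ j v ∈ G.neighborSet v := hN v ▸ ⟨j, rfl⟩
      exact ⟨hadj, v, φ j v, rfl, hv, hjv⟩
  rw [hcut, Set.ncard_coe_finset, Finset.card_image_of_injOn, Finset.card_sigma]
  · simp only [exitCount, Set.ncard_eq_toFinset_card']
  rintro ⟨j, v⟩ hv ⟨j', v'⟩ hv' h
  simp only [Finset.coe_sigma, Set.mem_sigma_iff, Finset.mem_coe, Set.mem_toFinset, S]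
    at hv hv' h
  rcases Sym2.eq_iff.1 h with ⟨rfl, h⟩ | ⟨rfl, -⟩
  · obtain rfl := hφ v h
    rfl
  · exact absurd hv.2.1 hv'.2.2

lemma cutEdges_empty : cutEdges G ∅ = ∅ := by
  simp [cutEdges]

lemma one_lt_ncard_of_not_isTrivialShore [Finite V] {X : Set V} (hX : X.Nonempty)
    (hX' : ¬ IsTrivialShore X) : 1 < X.ncard :=
  Set.one_lt_ncard_iff_nontrivial.2 (hX.exists_eq_singleton_or_nontrivial.resolve_left
    fun h => hX' (Or.inl h))

end Cuts

lemma colorable_boxProd {W : Type*} {G : SimpleGraph V} {H : SimpleGraph W} {m : ℕ} [NeZero m]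
    (hG : G.Colorable m) (hH : H.Colorable m) : (G □ H).Colorable m := by
  obtain ⟨f⟩ := hG
  obtain ⟨g⟩ := hH
  refine ⟨Coloring.mk (fun x => f x.1 + g x.2) ?_⟩
  rintro ⟨a₁, b₁⟩ ⟨a₂, b₂⟩ (⟨h, rfl⟩ | ⟨h, rfl⟩)
  · simpa using f.valid h
  · simpa using g.valid h

lemma sum_range_ite_zero_even {M : Type*} [AddCommMonoid M] (k : ℕ) (a b c : M) :
    ∑ m ∈ Finset.range (2 * k + 1), (if m = 0 then a else if Even m then b else c)
      = a + k • (b + c) := by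
  induction k with
  | zero => simp
  | succ k ih =>
    rw [show 2 * (k + 1) + 1 = 2 * k + 1 + 1 + 1 by ring, Finset.sum_range_succ,
      Finset.sum_range_succ, ih]
    simp [parity_simps, succ_nsmul]
    abel

section Prism

open Fin.CommRing

def prism (n : ℕ) : SimpleGraph (Fin n × Fin 2) := cycleGraph n □ ⊤

variable {n : ℕ}

def next (v : Fin (n + 1) × Fin 2) : Fin (n + 1) × Fin 2 := (v.1 + 1, v.2)

def prev (v : Fin (n + 1) × Fin 2) : Fin (n + 1) × Fin 2 := (v.1 - 1, v.2)

def across (v : Fin (n + 1) × Fin 2) : Fin (n + 1) × Fin 2 := (v.1, v.2 + 1)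

lemma fin_two_add_one_add_one : ∀ c : Fin 2, c + 1 + 1 = c := by decide

lemma fin_two_ne_iff : ∀ c d : Fin 2, c ≠ d ↔ d = c + 1 := by decide

@[simp] lemma next_prev (v : Fin (n + 1) × Fin 2) : next (prev v) = v := by simp [next, prev]

@[simp] lemma prev_next (v : Fin (n + 1) × Fin 2) : prev (next v) = v := by simp [next, prev]

lemma across_involutive : Function.Involutive (across (n := n)) := fun v => by
  simp [across, fin_two_add_one_add_one]

lemma val_one_of_pos (hn : 1 ≤ n) : (1 : Fin (n + 1)).val = 1 := by
  rw [Fin.val_one', Nat.mod_eq_of_lt (by omega)]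

lemma prism_adj (hn : 1 ≤ n) {u v : Fin (n + 1) × Fin 2} :
    (prism (n + 1)).Adj u v ↔ v = next u ∨ v = prev u ∨ v = across u := by
  have hone : ∀ a : Fin (n + 1), a.val = 1 ↔ a = 1 := fun a => by
    rw [Fin.ext_iff, val_one_of_pos hn]
  obtain ⟨i, c⟩ := u
  obtain ⟨j, d⟩ := v
  simp only [prism, boxProd_adj, cycleGraph_adj', hone, top_adj, fin_two_ne_iff, next, prev,
    across, Prod.mk.injEq, sub_eq_iff_eq_add]
  constructor
  · rintro (⟨rfl | rfl, rfl⟩ | ⟨rfl, rfl⟩)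
    · exact Or.inr (Or.inl ⟨by abel, rfl⟩)
    · exact Or.inl ⟨add_comm _ _, rfl⟩
    · exact Or.inr (Or.inr ⟨rfl, rfl⟩)
  · rintro (⟨rfl, rfl⟩ | ⟨rfl, rfl⟩ | ⟨rfl, rfl⟩)
    · exact Or.inl ⟨Or.inr (add_comm _ _), rfl⟩
    · exact Or.inl ⟨Or.inl (by abel), rfl⟩
    · exact Or.inr ⟨rfl, rfl⟩

lemma prism_adj_next (hn : 1 ≤ n) (v : Fin (n + 1) × Fin 2) : (prism (n + 1)).Adj v (next v) :=
  (prism_adj hn).2 (Or.inl rfl)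

lemma prism_adj_across (v : Fin (n + 1) × Fin 2) : (prism (n + 1)).Adj v (across v) :=
  Or.inr ⟨by simp [across], rfl⟩

lemma prism_edge_cases (hn : 1 ≤ n) {e : Sym2 (Fin (n + 1) × Fin 2)}
    (he : e ∈ (prism (n + 1)).edgeSet) : ∃ w, e = s(w, next w) ∨ e = s(w, across w) := by
  induction e with
  | h u v =>
    rw [mem_edgeSet, prism_adj hn] at he
    rcases he with rfl | rfl | rfl
    · exact ⟨u, Or.inl rfl⟩
    · exact ⟨prev u, Or.inl (by rw [next_prev, Sym2.eq_swap])⟩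
    · exact ⟨u, Or.inr rfl⟩

lemma prism_neighborSet (hn : 1 ≤ n) (v : Fin (n + 1) × Fin 2) :
    (prism (n + 1)).neighborSet v = Set.range (![next, prev, across] · v) := by
  ext w
  simp only [mem_neighborSet, prism_adj hn, Set.mem_range, Fin.exists_fin_succ]
  simp [eq_comm, or_comm, or_left_comm]

lemma injective_next_prev_across (hn : 2 ≤ n) (v : Fin (n + 1) × Fin 2) :
    Function.Injective (![next, prev, across] · v) := by
  have h2 : (2 : Fin (n + 1)) ≠ 0 := by
    rw [Ne, Fin.ext_iff]; simp [Nat.mod_eq_of_lt (show 2 < n + 1 by omega)]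
  intro i j h
  fin_cases i <;> fin_cases j <;> simp [next, prev, across] at h ⊢
  · exact h2 (by linear_combination h)
  · exact h2 (by linear_combination -h)

lemma prism_cubic (hn : 2 ≤ n) : Cubic (prism (n + 1)) := fun v => by
  rw [prism_neighborSet (by omega),
    Set.ncard_range_of_injective (injective_next_prev_across hn v), Nat.card_eq_fintype_card,
    Fintype.card_fin]

lemma ncard_cutEdges_prism (hn : 2 ≤ n) (X : Set (Fin (n + 1) × Fin 2)) :
    (cutEdges (prism (n + 1)) X).ncard
      = exitCount next X + exitCount prev X + exitCount across X := by
  rw [ncard_cutEdges_eq_sum_exitCount _ (prism_neighborSet (by omega))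
    (injective_next_prev_across hn), Fin.sum_univ_three]
  rfl

def SplitsCopy (X : Set (Fin (n + 1) × Fin 2)) (c : Fin 2) : Prop :=
  (∃ i, (i, c) ∈ X) ∧ ∃ i, (i, c) ∉ X

lemma exists_mem_add_one_notMem {S : Set (Fin (n + 1))} (hS : S.Nonempty)
    (hS' : Sᶜ.Nonempty) :
    ∃ i ∈ S, i + 1 ∉ S := by
  by_contra! h
  obtain ⟨a, ha⟩ := hS
  obtain ⟨b, hb⟩ := hS'
  have hadd : ∀ m : ℕ, a + m ∈ S := by
    intro m
    induction m with
    | zero => simpa using ha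
    | succ m ih => simpa [add_assoc] using h _ ih
  exact hb (by simpa using hadd (b - a).val)

lemma SplitsCopy.compl {X : Set (Fin (n + 1) × Fin 2)} {c : Fin 2} (h : SplitsCopy X c) :
    SplitsCopy Xᶜ c :=
  ⟨h.2, by simpa using h.1⟩

lemma SplitsCopy.exists_next_exit {X : Set (Fin (n + 1) × Fin 2)} {c : Fin 2}
    (h : SplitsCopy X c) :
    ∃ v ∈ X, v.2 = c ∧ next v ∉ X := by
  obtain ⟨i, hi, hi'⟩ := exists_mem_add_one_notMem (S := {i | (i, c) ∈ X}) h.1 h.2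
  exact ⟨(i, c), hi, rfl, hi'⟩

lemma SplitsCopy.exists_prev_exit {X : Set (Fin (n + 1) × Fin 2)} {c : Fin 2}
    (h : SplitsCopy X c) :
    ∃ v ∈ X, v.2 = c ∧ prev v ∉ X := by
  obtain ⟨w, hw, rfl, hw'⟩ := h.compl.exists_next_exit
  exact ⟨next w, not_not.1 hw', rfl, by simpa using hw⟩

lemma ncard_splitsCopy_le_exitCount {X : Set (Fin (n + 1) × Fin 2)}
    {f : Fin (n + 1) × Fin 2 → Fin (n + 1) × Fin 2}
    (hf : ∀ c, SplitsCopy X c → ∃ v ∈ X, v.2 = c ∧ f v ∉ X) :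
    {c | SplitsCopy X c}.ncard ≤ exitCount f X := by
  calc {c | SplitsCopy X c}.ncard ≤ (Prod.snd '' {v ∈ X | f v ∉ X}).ncard := by
        refine Set.ncard_le_ncard (fun c hc => ?_)
        obtain ⟨v, hv, rfl, hfv⟩ := hf c hc
        exact ⟨v, ⟨hv, hfv⟩, rfl⟩
    _ ≤ exitCount f X := Set.ncard_image_le

lemma exitCount_across_of_forall_notMem {X : Set (Fin (n + 1) × Fin 2)} {c : Fin 2}
    (hc : ∀ i, (i, c) ∉ X) : exitCount across X = X.ncard := by
  refine congrArg Set.ncard (Set.sep_eq_self_iff_mem_true.2 fun v hv => ?_)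
  have hv2 : v.2 + 1 = c := ((fin_two_ne_iff _ _).1 fun h => hc v.1 (by rwa [← h])).symm
  simpa [across, hv2] using hc v.1

lemma le_ncard_cutEdges_of_forall_notMem (hn : 2 ≤ n) {X : Set (Fin (n + 1) × Fin 2)}
    {c : Fin 2} (hc : ∀ i, (i, c) ∉ X) (hX : X.Nonempty) :
    min (n + 1) (X.ncard + 2) ≤ (cutEdges (prism (n + 1)) X).ncard := by
  rw [ncard_cutEdges_prism hn, exitCount_across_of_forall_notMem hc]
  by_cases hs : SplitsCopy X (c + 1)
  · obtain ⟨v, hv, -, hv'⟩ := hs.exists_next_exit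
    obtain ⟨w, hw, -, hw'⟩ := hs.exists_prev_exit
    have h₁ : 0 < exitCount next X := (Set.ncard_pos).2 ⟨v, hv, hv'⟩
    have h₂ : 0 < exitCount prev X := (Set.ncard_pos).2 ⟨w, hw, hw'⟩
    omega
  · obtain ⟨v, hv⟩ := hX
    have hv2 : v.2 = c + 1 := (fin_two_ne_iff _ _).1 fun h => hc v.1 (by rwa [h])
    have hcopy : Set.range (fun i => (i, c + 1)) ⊆ X := by
      rintro _ ⟨i, rfl⟩
      by_contra hi
      exact hs ⟨⟨v.1, hv2 ▸ hv⟩, i, hi⟩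
    have := Set.ncard_le_ncard hcopy
    rw [Set.ncard_range_of_injective (fun i j h => (Prod.mk.inj h).1), Nat.card_eq_fintype_card,
      Fintype.card_fin] at this
    omega

lemma min_le_ncard_cutEdges_prism (hn : 2 ≤ n) {X : Set (Fin (n + 1) × Fin 2)}
    (hX : X.Nonempty) (hXc : Xᶜ.Nonempty) :
    min 4 (min (n + 1) (min X.ncard Xᶜ.ncard + 2)) ≤ (cutEdges (prism (n + 1)) X).ncard := by
  by_cases hs : ∀ c, SplitsCopy X c
  · have hall : {c | SplitsCopy X c}.ncard = 2 := by simp [hs]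
    have h₁ := ncard_splitsCopy_le_exitCount fun c (h : SplitsCopy X c) => h.exists_next_exit
    have h₂ := ncard_splitsCopy_le_exitCount fun c (h : SplitsCopy X c) => h.exists_prev_exit
    rw [ncard_cutEdges_prism hn]
    omega
  · obtain ⟨c, hc⟩ := not_forall.1 hs
    simp only [SplitsCopy, not_and_or, not_exists, not_not] at hc
    rcases hc with hc | hc
    · have := le_ncard_cutEdges_of_forall_notMem hn hc hX
      omega
    · have := le_ncard_cutEdges_of_forall_notMem hn (X := Xᶜ) (fun i => not_not.2 (hc i)) hXc
      rw [cutEdges_compl] at this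
      omega

theorem prism_essFourEdgeConnected (hn : 3 ≤ n) : EssFourEdgeConnected (prism (n + 1)) := by
  refine ⟨fun X hX hXc => ?_, fun X h3 => ?_⟩
  · have := min_le_ncard_cutEdges_prism (by omega) hX hXc
    have := (Set.ncard_pos).2 hX
    have := (Set.ncard_pos).2 hXc
    omega
  by_contra hX
  have hne : X.Nonempty := Set.nonempty_iff_ne_empty.2 fun h => by
    simp [h, cutEdges_empty] at h3
  have hne' : Xᶜ.Nonempty := Set.nonempty_iff_ne_empty.2 fun h => by
    simp [← cutEdges_compl (X := X), h, cutEdges_empty] at h3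
  have := min_le_ncard_cutEdges_prism (by omega) hne hne'
  have := one_lt_ncard_of_not_isTrivialShore hne hX
  have := one_lt_ncard_of_not_isTrivialShore hne' (isTrivialShore_compl.not.2 hX)
  omega

end Prism

section Ladder

variable {n : ℕ}

def wrap (n : ℕ) (c : Fin 2) : Sym2 (Fin (n + 1) × Fin 2) := s((Fin.last n, c), (0, c))

lemma cycleGraph_adj_and_ne_iff (hn : 2 ≤ n) {i j : Fin (n + 1)} :
    (cycleGraph (n + 1)).Adj i j ∧ s(i, j) ≠ s(Fin.last n, 0) ↔ (pathGraph (n + 1)).Adj i j := by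
  have hsub : ∀ a b : Fin (n + 1),
      (a - b).val = 1 ↔ a.val = b.val + 1 ∨ (a.val = 0 ∧ b.val = n) := by
    intro a b
    have := a.isLt
    have := b.isLt
    rcases le_or_gt b a with h | h
    · rw [Fin.coe_sub_iff_le.2 h]
      have := Fin.le_def.1 h
      omega
    · rw [Fin.coe_sub_iff_lt.2 h]
      have := Fin.lt_def.1 h
      omega
  rw [cycleGraph_adj', pathGraph_adj, hsub, hsub, Ne, Sym2.eq_iff, Fin.ext_iff, Fin.ext_iff,
    Fin.ext_iff, Fin.ext_iff, Fin.val_last, Fin.val_zero]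
  omega

lemma prism_deleteEdges_wrap (hn : 2 ≤ n) :
    (prism (n + 1)).deleteEdges {wrap n 0, wrap n 1} = pathGraph (n + 1) □ ⊤ := by
  have hlast : Fin.last n ≠ 0 := Fin.ext_iff.not.2 (by simp; omega)
  ext ⟨i, c⟩ ⟨j, d⟩
  have hpath := cycleGraph_adj_and_ne_iff hn (i := i) (j := j)
  simp only [deleteEdges_adj, prism, boxProd_adj, wrap, Set.mem_insert_iff, Set.mem_singleton_iff,
    Sym2.eq_iff, Prod.mk.injEq, top_adj, Ne] at hpath ⊢
  constructor
  · rintro ⟨⟨hij, rfl⟩ | ⟨hcd, rfl⟩, hw⟩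
    · refine Or.inl ⟨hpath.1 ⟨hij, ?_⟩, rfl⟩
      fin_cases c <;> simpa using hw
    · exact Or.inr ⟨hcd, rfl⟩
  · rintro (⟨hij, rfl⟩ | ⟨hcd, rfl⟩)
    · refine ⟨Or.inl ⟨(hpath.2 hij).1, rfl⟩, ?_⟩
      have := (hpath.2 hij).2
      tauto
    · refine ⟨Or.inr ⟨hcd, rfl⟩, ?_⟩
      clear hpath
      rintro ((h | h) | (h | h)) <;> simp_all

lemma ladder_colorable_two (hn : 2 ≤ n) :
    ((prism (n + 1)).deleteEdges {wrap n 0, wrap n 1}).Colorable 2 := by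
  rw [prism_deleteEdges_wrap hn]
  exact colorable_boxProd (by simpa using (pathGraph.bicoloring (n + 1)).colorable)
    (by simpa using colorable_of_fintype (⊤ : SimpleGraph (Fin 2)))

lemma mk_across_ne_wrap (v : Fin (n + 1) × Fin 2) (c : Fin 2) : s(v, across v) ≠ wrap n c := by
  rw [wrap, Ne, Sym2.eq_iff]
  rintro (⟨rfl, h⟩ | ⟨rfl, h⟩) <;> simp [across] at h

end Ladder

section OddPrism

open Fin.CommRing

variable {k : ℕ}

/-- The partner of `v` in the perfect matching `M_t` made of the rung at `t` and, in each copy,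
of the edges `{t + 1, t + 2}, {t + 3, t + 4}, …, {t + 2k - 1, t + 2k}`. -/
def pairing (t : Fin (2 * k + 1)) (v : Fin (2 * k + 1) × Fin 2) : Fin (2 * k + 1) × Fin 2 :=
  if v.1 - t = 0 then across v else if Even (v.1 - t).val then prev v else next v

lemma pairing_of_odd {t : Fin (2 * k + 1)} {v : Fin (2 * k + 1) × Fin 2}
    (h : Odd (v.1 - t).val) : pairing t v = next v := by
  have h0 : v.1 - t ≠ 0 := fun h0 => by simp [h0] at h
  simp [pairing, h0, Nat.not_even_iff_odd.2 h]

lemma pairing_involutive (t : Fin (2 * k + 1)) : Function.Involutive (pairing t) := by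
  intro v
  by_cases h0 : v.1 - t = 0
  · simp [pairing, h0, across, fin_two_add_one_add_one]
  by_cases he : Even (v.1 - t).val
  · have hval : (prev v).1 - t = v.1 - t - 1 := by simp only [prev]; ring
    have hodd : Odd ((prev v).1 - t).val := by
      rw [hval, Fin.coe_sub_one, if_neg h0]
      have : (v.1 - t).val ≠ 0 := fun h => h0 (Fin.ext h)
      obtain ⟨m, hm⟩ := he
      exact ⟨m - 1, by omega⟩
    have hv : pairing t v = prev v := by simp [pairing, h0, he]
    rw [hv, pairing_of_odd hodd, next_prev]
  · have hval : ((next v).1 - t).val = (v.1 - t).val + 1 := by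
      rw [show (next v).1 - t = v.1 - t + 1 by simp only [next]; ring]
      refine Fin.val_add_one_of_lt (Fin.lt_last_iff_ne_last.2 fun h => he ?_)
      rw [h, Fin.val_last]
      exact even_two_mul k
    have h0' : (next v).1 - t ≠ 0 := fun h => by simp [h] at hval
    have he' : Even ((next v).1 - t).val := by
      rw [hval]; exact (Nat.not_even_iff_odd.1 he).add_one
    simp [pairing, h0, he, h0', he']

lemma prism_adj_pairing (hk : 1 ≤ k) (t : Fin (2 * k + 1)) (v : Fin (2 * k + 1) × Fin 2) :
    (prism (2 * k + 1)).Adj v (pairing t v) := by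
  rw [prism_adj (by omega), pairing]
  split_ifs <;> simp

lemma sum_pairing {M : Type*} [AddCommMonoid M] (h : Fin (2 * k + 1) × Fin 2 → M)
    (v : Fin (2 * k + 1) × Fin 2) :
    ∑ t, h (pairing t v) = h (across v) + k • (h (prev v) + h (next v)) := by
  rw [← sum_range_ite_zero_even, ← Fin.sum_univ_eq_sum_range]
  refine Fintype.sum_equiv (Equiv.subLeft v.1) _ _ fun t => ?_
  simp only [pairing, Equiv.subLeft_apply, Fin.val_eq_zero_iff]
  split_ifs <;> rfl

lemma sum_exitCount_pairing (X : Set (Fin (2 * k + 1) × Fin 2)) :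
    ∑ t, exitCount (pairing t) X
      = exitCount across X + k * (exitCount prev X + exitCount next X) := by
  classical
  simp only [exitCount_eq_sum _ X]
  rw [Finset.sum_comm, Finset.sum_congr rfl fun v _ =>
    sum_pairing (fun w => if v ∈ X ∧ w ∉ X then 1 else 0) v]
  simp only [smul_eq_mul, Finset.sum_add_distrib, ← Finset.mul_sum]

lemma isTrivialShore_of_isTightCut_of_forall_notMem {X : Set (Fin (2 * k + 1) × Fin 2)}
    {c : Fin 2} (hX : IsTightCut (prism (2 * k + 1)) X) (hc : ∀ i, (i, c) ∉ X) :
    IsTrivialShore X := by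
  have h := exitCount_eq_one_of_isTightCut hX across across_involutive prism_adj_across
  rw [exitCount_across_of_forall_notMem hc] at h
  exact Or.inl (Set.ncard_eq_one.1 h)

theorem prism_isTrivialShore_of_isTightCut (hk : 1 ≤ k) {X : Set (Fin (2 * k + 1) × Fin 2)}
    (hX : IsTightCut (prism (2 * k + 1)) X) : IsTrivialShore X := by
  have hsum := sum_exitCount_pairing X
  simp only [exitCount_eq_one_of_isTightCut hX _ (pairing_involutive _) (prism_adj_pairing hk _),
    exitCount_eq_one_of_isTightCut hX _ across_involutive prism_adj_across, Finset.sum_const,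
    Finset.card_univ, Fintype.card_fin, smul_eq_mul, mul_one] at hsum
  have hprev := ncard_splitsCopy_le_exitCount fun c (h : SplitsCopy X c) => h.exists_prev_exit
  have hnext := ncard_splitsCopy_le_exitCount fun c (h : SplitsCopy X c) => h.exists_next_exit
  have hexits : exitCount prev X + exitCount next X = 2 :=
    Nat.eq_of_mul_eq_mul_left (by omega : 0 < k) (by omega)
  obtain ⟨c, hc⟩ : ∃ c, ¬ SplitsCopy X c := by
    by_contra! h
    have : {c | SplitsCopy X c}.ncard = 2 := by simp [h]
    omega
  simp only [SplitsCopy, not_and_or, not_exists, not_not] at hc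
  rcases hc with hc | hc
  · exact isTrivialShore_of_isTightCut_of_forall_notMem hX hc
  · exact isTrivialShore_compl.1 (isTrivialShore_of_isTightCut_of_forall_notMem
      (isTightCut_compl.2 hX) fun i => not_not.2 (hc i))

lemma prism_not_colorable_two (hk : 1 ≤ k) : ¬ (prism (2 * k + 1)).Colorable 2 := fun h => by
  have h₃ := chromaticNumber_cycleGraph_of_odd (2 * k + 1) (by omega) (odd_two_mul_add_one k)
  have h₂ := (h.of_hom (boxProdLeft (cycleGraph (2 * k + 1)) ⊤ 0).toHom).chromaticNumber_le
  rw [h₃] at h₂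
  exact absurd h₂ (by decide)

theorem prism_matchingCovered (hk : 1 ≤ k) : MatchingCovered (prism (2 * k + 1)) := by
  refine ⟨cycleGraph_connected.boxProd connected_top,
    ⟨s((0, 0), across (0, 0)), prism_adj_across (0, 0)⟩, fun e he => ?_⟩
  obtain ⟨w, rfl | rfl⟩ := prism_edge_cases (by omega) he
  · have hodd : Odd (w.1 - (w.1 - 1)).val := by
      rw [sub_sub_cancel, val_one_of_pos (by omega)]
      exact odd_one
    exact ⟨matchingOfInvolutive _ _ (pairing_involutive _) (prism_adj_pairing hk (w.1 - 1)),
      isPerfectMatching_matchingOfInvolutive, (pairing_of_odd hodd).symm⟩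
  · exact ⟨matchingOfInvolutive _ _ across_involutive prism_adj_across,
      isPerfectMatching_matchingOfInvolutive, rfl⟩

lemma pairing_last_ne (hk : 1 ≤ k) {t : Fin (2 * k + 1)} (ht : Even t.val) (c : Fin 2) :
    pairing t (Fin.last (2 * k), c) ≠ (0, c) := by
  have heven : Even (Fin.last (2 * k) - t).val := by
    rw [Fin.coe_sub_iff_le.2 (Fin.le_last t), Fin.val_last, Nat.even_sub t.is_le]
    exact iff_of_true (even_two_mul k) ht
  by_cases h0 : Fin.last (2 * k) - t = 0
  · simp [pairing, h0, across]
  · simp only [pairing, h0, heven, prev, if_false, if_true, Ne, Prod.mk.injEq, and_true]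
    intro h
    have := congrArg Fin.val (sub_eq_zero.1 h)
    rw [Fin.val_last, val_one_of_pos (by omega)] at this
    omega

lemma mk_pairing_ne_wrap (hk : 1 ≤ k) {t : Fin (2 * k + 1)} (ht : Even t.val)
    (v : Fin (2 * k + 1) × Fin 2) (c : Fin 2) : s(v, pairing t v) ≠ wrap (2 * k) c := by
  rw [wrap, Ne, Sym2.eq_iff]
  rintro (⟨rfl, h⟩ | ⟨rfl, h⟩)
  · exact pairing_last_ne hk ht c h
  · exact pairing_last_ne hk ht c (by rw [← h, pairing_involutive])

lemma exists_even_odd_sub (hk : 1 ≤ k) {i : Fin (2 * k + 1)} (hi : i ≠ Fin.last (2 * k)) :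
    ∃ t : Fin (2 * k + 1), Even t.val ∧ Odd (i - t).val := by
  rcases Nat.even_or_odd i.val with he | ho
  · have hi' : i.val + 2 < 2 * k + 1 := by
      have := Fin.val_lt_last hi
      obtain ⟨m, hm⟩ := he
      omega
    refine ⟨⟨i.val + 2, hi'⟩, he.add even_two, ?_⟩
    rw [Fin.coe_sub_iff_lt.2 (Fin.lt_def.2 (by simp))]
    exact ⟨k - 1, by simp only; omega⟩
  · exact ⟨0, by simp, by simpa using ho⟩

theorem ladder_matchingCovered (hk : 1 ≤ k) :
    MatchingCovered ((prism (2 * k + 1)).deleteEdges {wrap (2 * k) 0, wrap (2 * k) 1}) := by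
  have hconn : ((prism (2 * k + 1)).deleteEdges {wrap (2 * k) 0, wrap (2 * k) 1}).Connected := by
    rw [prism_deleteEdges_wrap (by omega)]
    exact (pathGraph_connected _).boxProd connected_top
  have hacross : ∀ v, ((prism (2 * k + 1)).deleteEdges {wrap (2 * k) 0, wrap (2 * k) 1}).Adj v
      (across v) := fun v => (deleteEdges_adj ..).2
    ⟨prism_adj_across v, by rintro (h | h) <;> exact mk_across_ne_wrap v _ h⟩
  refine ⟨hconn, ⟨s((0, 0), across (0, 0)), hacross (0, 0)⟩, fun e he => ?_⟩
  rw [edgeSet_deleteEdges] at he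
  obtain ⟨w, rfl | rfl⟩ := prism_edge_cases (by omega) he.1
  · have hw : w.1 ≠ Fin.last (2 * k) := by
      obtain ⟨i, c⟩ := w
      rintro (rfl : i = _)
      refine he.2 ?_
      fin_cases c <;> simp [wrap, next]
    obtain ⟨t, ht, hodd⟩ := exists_even_odd_sub hk hw
    have hadj : ∀ v, ((prism (2 * k + 1)).deleteEdges {wrap (2 * k) 0, wrap (2 * k) 1}).Adj v
        (pairing t v) := fun v => (deleteEdges_adj ..).2
      ⟨prism_adj_pairing hk t v, by rintro (h | h) <;> exact mk_pairing_ne_wrap hk ht v _ h⟩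
    exact ⟨matchingOfInvolutive _ (pairing t) (pairing_involutive t) hadj,
      isPerfectMatching_matchingOfInvolutive, (pairing_of_odd hodd).symm⟩
  · exact ⟨matchingOfInvolutive _ across across_involutive hacross,
      isPerfectMatching_matchingOfInvolutive, rfl⟩

theorem prism_nearBipartite (hk : 1 ≤ k) : NearBipartite (prism (2 * k + 1)) := by
  have hwrap : ∀ c, wrap (2 * k) c ∈ (prism (2 * k + 1)).edgeSet := fun c => by
    have := prism_adj_next (by omega) (Fin.last (2 * k), c)
    rwa [next, Fin.last_add_one] at this
  refine ⟨prism_matchingCovered hk, prism_not_colorable_two hk, wrap (2 * k) 0, wrap (2 * k) 1,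
    hwrap 0, hwrap 1, by simp [wrap], ladder_colorable_two (by omega), ladder_matchingCovered hk⟩

end OddPrism

/-- For every integer `k ≥ 2`, the prism of order `4k + 2`, i.e. the
Cartesian product `C_{2k+1} □ K₂`, is an essentially 4-edge-connected cubic
near-bipartite brick. -/
theorem stmt14 (k : ℕ) (hk : 2 ≤ k) :
    Cubic (SimpleGraph.boxProd (SimpleGraph.cycleGraph (2 * k + 1))
        (⊤ : SimpleGraph (Fin 2))) ∧
    EssFourEdgeConnected (SimpleGraph.boxProd (SimpleGraph.cycleGraph (2 * k + 1))
        (⊤ : SimpleGraph (Fin 2))) ∧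
    NearBipartite (SimpleGraph.boxProd (SimpleGraph.cycleGraph (2 * k + 1))
        (⊤ : SimpleGraph (Fin 2))) ∧
    IsBrick (SimpleGraph.boxProd (SimpleGraph.cycleGraph (2 * k + 1))
        (⊤ : SimpleGraph (Fin 2))) :=
  ⟨prism_cubic (by omega), prism_essFourEdgeConnected (by omega), prism_nearBipartite (by omega),
    prism_matchingCovered (by omega), prism_not_colorable_two (by omega),
    fun _ => prism_isTrivialShore_of_isTightCut (by omega)⟩

end Paper
end
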